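/- For v = v1 = (1,0,0) in the Yu-Oh set, there exist valid KS-assignments on the Yu-Oh set, each with value 1 at v1, whose supports (sets of vectors assigned 1) are exactly {v1,v5,v6,vA}, {v1,v5,v9,vC}, {v1,v8,v9,vD} and {v1,v6,v8,vB}. -/
import Mathlib

/-- Standard dot product on ℝ³ (as `Fin 3 → ℝ`). -/
def dot (u v : Fin 3 → ℝ) : ℝ := ∑ i, u i * v i

/-- The 13 vectors of the Yu-Oh set. -/
def yuOh : Fin 13 → Fin 3 → ℝ :=
  ![![1,0,0], ![0,1,0], ![0,0,1], ![0,1,-1], ![1,0,-1], ![1,-1,0],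
    ![0,1,1], ![1,0,1], ![1,1,0], ![-1,1,1], ![1,-1,1], ![1,1,-1], ![1,1,1]]

/-- A Kochen-Specker assignment on the Yu-Oh set: orthogonal vectors never both
get 1, and every triple of pairwise orthogonal vectors has assignments summing to 1. -/
def IsKS (l : Fin 13 → Fin 2) : Prop :=
  (∀ i j : Fin 13, dot (yuOh i) (yuOh j) = 0 → ((l i : ℕ) * (l j : ℕ) = 0)) ∧
  (∀ i j k : Fin 13, i ≠ j → i ≠ k → j ≠ k →
    dot (yuOh i) (yuOh j) = 0 → dot (yuOh i) (yuOh k) = 0 → dot (yuOh j) (yuOh k) = 0 →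
    ((l i : ℕ) + (l j : ℕ) + (l k : ℕ) = 1))

def yuOhZ : Fin 13 → Fin 3 → ℤ :=
  ![![1,0,0], ![0,1,0], ![0,0,1], ![0,1,-1], ![1,0,-1], ![1,-1,0],
    ![0,1,1], ![1,0,1], ![1,1,0], ![-1,1,1], ![1,-1,1], ![1,1,-1], ![1,1,1]]

def dotZ (i j : Fin 13) : ℤ := ∑ k, yuOhZ i k * yuOhZ j k

lemma yuOh_eq (i : Fin 13) (k : Fin 3) : yuOh i k = (yuOhZ i k : ℝ) := by
  fin_cases i <;> fin_cases k <;> norm_num [yuOh, yuOhZ]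

lemma dot_eq (i j : Fin 13) : dot (yuOh i) (yuOh j) = (dotZ i j : ℝ) := by
  simp [dot, dotZ, yuOh_eq]

lemma dot_zero_iff (i j : Fin 13) : dot (yuOh i) (yuOh j) = 0 ↔ dotZ i j = 0 := by
  rw [dot_eq]; exact_mod_cast Int.cast_eq_zero (α := ℝ)

/-- Indices: v1=0, v5=4, v6=5, v8=7, v9=8, vA=9, vB=10, vC=11, vD=12.
The indicator functions of {v1,v5,v6,vA}, {v1,v5,v9,vC}, {v1,v8,v9,vD},
{v1,v6,v8,vB} are all valid KS-assignments on the Yu-Oh set (each assigning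
1 to v1). -/
theorem stmt18 :
    ∀ S ∈ ({ {0,4,5,9}, {0,4,8,11}, {0,7,8,12}, {0,5,7,10} } :
        Finset (Finset (Fin 13))),
      IsKS (fun i => if i ∈ S then 1 else 0) ∧
        (fun i : Fin 13 => if i ∈ S then (1 : Fin 2) else 0) 0 = 1 := by
  have key : ∀ S : Finset (Fin 13),
      ((∀ i j : Fin 13, dotZ i j = 0 →
        (Fin.val (if i ∈ S then (1:Fin 2) else 0) * Fin.val (if j ∈ S then (1:Fin 2) else 0) = 0)) ∧
      (∀ i j k : Fin 13, i ≠ j → i ≠ k → j ≠ k →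
        dotZ i j = 0 → dotZ i k = 0 → dotZ j k = 0 →
        (Fin.val (if i ∈ S then (1:Fin 2) else 0) + Fin.val (if j ∈ S then (1:Fin 2) else 0)
          + Fin.val (if k ∈ S then (1:Fin 2) else 0) = 1))) →
      IsKS (fun i => if i ∈ S then 1 else 0) := by
    intro S h
    exact ⟨fun i j hij => h.1 i j ((dot_zero_iff i j).mp hij),
      fun i j k h1 h2 h3 d1 d2 d3 => h.2 i j k h1 h2 h3
        ((dot_zero_iff i j).mp d1) ((dot_zero_iff i k).mp d2) ((dot_zero_iff j k).mp d3)⟩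
  intro S hS
  fin_cases hS <;> exact ⟨key _ (by decide), by decide⟩
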